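/- arXiv:1608.00384 — 2 statements merged into one kernel-verified Lean document; each statement's English description precedes it below -/
import Mathlib

section
/- Let A be a commutative ring containing ℚ and let H be an n×n matrix over A[[x]] whose constant term H(0) is a nilpotent matrix over A. Define ∇ : A[[x]]ⁿ → A[[x]]ⁿ by ∇(v) = x·v′ + H·v. Let V := {v ∈ A[[x]]ⁿ : ∇^N(v) = 0 for some N ∈ ℕ}. Then V is an A-submodule of A[[x]]ⁿ which is free of rank n over A, V is stable under ∇, the restriction of ∇ to V is A-linear and nilpotent, and the natural A[[x]]-linear map A[[x]] ⊗_A V → A[[x]]ⁿ is bijective. -/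
/-!
Write `H₀ = H(0)`. Since `H₀` is nilpotent and `A ⊇ ℚ`, both `k + H₀` and the Sylvester operator
`M ↦ (k + H₀) M - M H₀` are invertible for every `k ≥ 1`. The second fact solves
`x P' + H P = P H₀`, `P(0) = 1`, coefficient by coefficient; then `∇ (P a) = P (H₀ a)` for constant
vectors `a`, so `a ↦ P a` maps `Aⁿ` into `V` and conjugates `H₀` to `∇`. The first fact gives
uniqueness: on a vector whose coefficients below `k` vanish, `∇` acts on the `k`-th coefficient as
`k + H₀`, so `∇^N v = 0` and `v(0) = 0` force `v = 0`. Hence `V = P Aⁿ`, and the tensor map is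
multiplication by `P`, which is invertible since `P(0) = 1`.
-/

open PowerSeries Matrix Finset

theorem IsNilpotent.isUnit_natCast_add (A : Type*) {R : Type*} [CommRing A] [Algebra ℚ A]
    [Ring R] [Algebra A R] {x : R} (hx : IsNilpotent x) {k : ℕ} (hk : k ≠ 0) :
    IsUnit ((k : R) + x) := by
  have hk : IsUnit (k : R) := by
    simpa using ((isUnit_iff_ne_zero.mpr (Nat.cast_ne_zero.mpr hk : (k : ℚ) ≠ 0)).map
      (algebraMap ℚ A)).map (algebraMap A R)
  exact hx.isUnit_add_left_of_commute hk (Nat.cast_commute k x).symm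

theorem isUnit_mulLeft_natCast_add_sub_mulRight {A R : Type*} [CommRing A] [Algebra ℚ A]
    [Ring R] [Algebra A R] {x : R} (hx : IsNilpotent x) {k : ℕ} (hk : k ≠ 0) :
    IsUnit (LinearMap.mulLeft A ((k : R) + x) - LinearMap.mulRight A x) := by
  have hnil : IsNilpotent (LinearMap.mulLeft A x - LinearMap.mulRight A x) :=
    (LinearMap.commute_mulLeft_right x x).isNilpotent_sub
      ((LinearMap.isNilpotent_mulLeft_iff A x).mpr hx)
      ((LinearMap.isNilpotent_mulRight_iff A x).mpr hx)
  have hsplit : LinearMap.mulLeft A ((k : R) + x) - LinearMap.mulRight A x =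
      (k : Module.End A R) + (LinearMap.mulLeft A x - LinearMap.mulRight A x) := by
    ext M
    simp [add_mul, add_sub_assoc]
  rw [hsplit]
  exact hnil.isUnit_natCast_add A hk

theorem Module.Basis.liftBaseChange_subtype_bijective {R S ι : Type*} [CommRing R] [CommRing S]
    [Algebra R S] [Fintype ι] [DecidableEq ι] {V : Submodule R (ι → S)} (b : Module.Basis ι R V)
    {P : Matrix ι ι S} (hP : IsUnit P) (hb : ∀ j, (b j : ι → S) = P.col j) :
    Function.Bijective (LinearMap.liftBaseChange S V.subtype) := by
  have h : LinearMap.liftBaseChange S V.subtype =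
      P.mulVecLin ∘ₗ ((b.baseChange S).equiv (Pi.basisFun S ι) (Equiv.refl ι)).toLinearMap :=
    (b.baseChange S).ext fun j => by
      rw [LinearMap.comp_apply, LinearEquiv.coe_coe, Module.Basis.equiv_apply]
      simp [hb]
  rw [h, LinearMap.coe_comp]
  exact .comp ⟨mulVec_injective_of_isUnit hP, mulVec_surjective_iff_isUnit.mpr hP⟩
    (LinearEquiv.bijective _)

namespace PowerSeries

variable {A ι : Type*} [CommRing A]

noncomputable def vecCoeff (k : ℕ) : (ι → A⟦X⟧) →ₗ[A] ι → A := (coeff k).compLeft ι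

@[simp]
theorem vecCoeff_apply (k : ℕ) (v : ι → A⟦X⟧) (i : ι) : vecCoeff k v i = coeff k (v i) := rfl

theorem ext_vecCoeff {v w : ι → A⟦X⟧} (h : ∀ k, vecCoeff k v = vecCoeff k w) : v = w :=
  funext fun i => PowerSeries.ext fun k => congrFun (h k) i

theorem coeff_X_mul_derivative (f : A⟦X⟧) (k : ℕ) :
    coeff k (X * derivative A f) = k * coeff k f := by
  cases k with
  | zero => simp
  | succ k => rw [coeff_succ_X_mul, coeff_derivative, mul_comm, Nat.cast_succ]

variable [Fintype ι]

noncomputable def nabla (H : Matrix ι ι A⟦X⟧) : Module.End A (ι → A⟦X⟧) where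
  toFun v i := X * derivative A (v i) + (H *ᵥ v) i
  map_add' v w := by
    ext1 i
    simp only [Pi.add_apply, map_add, mulVec_add]
    ring
  map_smul' c v := by
    ext1 i
    simp only [Pi.smul_apply, Derivation.map_smul, mulVec_smul, RingHom.id_apply, smul_add,
      mul_smul_comm]

theorem vecCoeff_mulVec (H : Matrix ι ι A⟦X⟧) (v : ι → A⟦X⟧) (k : ℕ) :
    vecCoeff k (H *ᵥ v) = ∑ j ∈ range (k + 1), H.map (coeff (k - j)) *ᵥ vecCoeff j v := by
  ext i
  simp only [vecCoeff_apply, mulVec, dotProduct, map_sum, coeff_mul, Finset.sum_apply, map_apply]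
  rw [Finset.sum_comm, ← Finset.Nat.sum_antidiagonal_swap]
  exact Finset.Nat.sum_antidiagonal_eq_sum_range_succ
    (fun p q => ∑ j, coeff q (H i j) * coeff p (v j)) k

variable [DecidableEq ι]

theorem vecCoeff_nabla (H : Matrix ι ι A⟦X⟧) (v : ι → A⟦X⟧) (k : ℕ) :
    vecCoeff k (nabla H v) = ((k : Matrix ι ι A) + H.map constantCoeff) *ᵥ vecCoeff k v +
      ∑ j ∈ range k, H.map (coeff (k - j)) *ᵥ vecCoeff j v := by
  have hv : vecCoeff k (nabla H v) =
      vecCoeff k (fun i => X * derivative A (v i)) + vecCoeff k (H *ᵥ v) := rfl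
  rw [hv, vecCoeff_mulVec, sum_range_succ, Nat.sub_self, add_mulVec, add_comm (∑ j ∈ _, _),
    ← add_assoc]
  congr 2
  · ext i
    simp [coeff_X_mul_derivative]
  · ext i
    simp

theorem vecCoeff_nabla_of_forall_lt {H : Matrix ι ι A⟦X⟧} {v : ι → A⟦X⟧} {k : ℕ}
    (hv : ∀ j < k, vecCoeff j v = 0) {j : ℕ} (hj : j ≤ k) :
    vecCoeff j (nabla H v) = ((j : Matrix ι ι A) + H.map constantCoeff) *ᵥ vecCoeff j v := by
  rw [vecCoeff_nabla, add_eq_left]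
  refine sum_eq_zero fun i hi => ?_
  rw [hv i (by grind), mulVec_zero]

theorem vecCoeff_pow_nabla_of_forall_lt {H : Matrix ι ι A⟦X⟧} {v : ι → A⟦X⟧} {k : ℕ}
    (hv : ∀ j < k, vecCoeff j v = 0) (N : ℕ) {j : ℕ} (hj : j ≤ k) :
    vecCoeff j ((nabla H ^ N) v) =
      ((j : Matrix ι ι A) + H.map constantCoeff) ^ N *ᵥ vecCoeff j v := by
  induction N generalizing j with
  | zero => simp
  | succ N ih =>
    have hN : ∀ i < k, vecCoeff i ((nabla H ^ N) v) = 0 := fun i hi => by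
      rw [ih hi.le, hv i hi, mulVec_zero]
    rw [pow_succ', Module.End.mul_apply, vecCoeff_nabla_of_forall_lt hN hj, ih hj, mulVec_mulVec,
      pow_succ']

theorem eq_zero_of_pow_nabla_apply_eq_zero [Algebra ℚ A] {H : Matrix ι ι A⟦X⟧}
    (hH : IsNilpotent (H.map constantCoeff)) {v : ι → A⟦X⟧} {N : ℕ} (hv : (nabla H ^ N) v = 0)
    (h0 : vecCoeff 0 v = 0) : v = 0 := by
  refine ext_vecCoeff fun k => ?_
  rw [map_zero]
  induction k using Nat.strong_induction_on with
  | _ k ih =>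
    obtain rfl | hk := eq_or_ne k 0
    · exact h0
    · refine mulVec_injective_of_isUnit ((hH.isUnit_natCast_add A hk).pow N) ?_
      rw [← vecCoeff_pow_nabla_of_forall_lt ih N le_rfl, hv, map_zero, mulVec_zero]

/-- The coefficients of the fundamental matrix `P`, determined by `x P' + H P = P H(0)` and
`P(0) = 1`: comparing `x^k`-coefficients, `P_k` solves the Sylvester equation
`(k + H(0)) P_k - P_k H(0) = -∑_{j<k} H_{k-j} P_j`. -/
noncomputable def fundCoeff (H : Matrix ι ι A⟦X⟧) : ℕ → Matrix ι ι A
  | 0 => 1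
  | k + 1 => Ring.inverse (LinearMap.mulLeft A ((k + 1 : ℕ) + H.map constantCoeff) -
      LinearMap.mulRight A (H.map constantCoeff))
      (-∑ j : Fin (k + 1), H.map (coeff (k + 1 - j)) * fundCoeff H j)

theorem fundCoeff_spec [Algebra ℚ A] (H : Matrix ι ι A⟦X⟧)
    (hH : IsNilpotent (H.map constantCoeff)) (k : ℕ) :
    ((k : Matrix ι ι A) + H.map constantCoeff) * fundCoeff H k +
      ∑ j ∈ range k, H.map (coeff (k - j)) * fundCoeff H j =
      fundCoeff H k * H.map constantCoeff := by
  cases k with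
  | zero => simp [fundCoeff]
  | succ k =>
    have hu := isUnit_mulLeft_natCast_add_sub_mulRight (A := A) hH k.add_one_ne_zero
    have h := congr($(Ring.mul_inverse_cancel _ hu)
      (-∑ j : Fin (k + 1), H.map (coeff (k + 1 - j)) * fundCoeff H j))
    rw [Module.End.mul_apply, ← fundCoeff,
      Fin.sum_univ_eq_sum_range (fun j => H.map (coeff (k + 1 - j)) * fundCoeff H j)] at h
    simp only [LinearMap.sub_apply, LinearMap.mulLeft_apply, LinearMap.mulRight_apply,
      Module.End.one_apply] at h
    rw [← sub_eq_zero, add_sub_right_comm, h, neg_add_cancel]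

noncomputable def fundMatrix (H : Matrix ι ι A⟦X⟧) : Matrix ι ι A⟦X⟧ :=
  Matrix.of fun i j => mk fun k => fundCoeff H k i j

theorem isUnit_fundMatrix (H : Matrix ι ι A⟦X⟧) : IsUnit (fundMatrix H) := by
  have h : (fundMatrix H).map constantCoeff = 1 := by
    ext i j
    simp [fundMatrix, fundCoeff]
  rw [isUnit_iff_isUnit_det, isUnit_iff_constantCoeff, RingHom.map_det, RingHom.mapMatrix_apply, h,
    det_one]
  exact isUnit_one

noncomputable def solution (H : Matrix ι ι A⟦X⟧) : (ι → A) →ₗ[A] ι → A⟦X⟧ :=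
  (fundMatrix H).mulVecLin.restrictScalars A ∘ₗ (Algebra.linearMap A A⟦X⟧).compLeft ι

theorem solution_apply (H : Matrix ι ι A⟦X⟧) (a : ι → A) :
    solution H a = fundMatrix H *ᵥ fun i => C (a i) := rfl

theorem vecCoeff_solution (H : Matrix ι ι A⟦X⟧) (a : ι → A) (k : ℕ) :
    vecCoeff k (solution H a) = fundCoeff H k *ᵥ a := by
  ext i
  simp [solution_apply, fundMatrix, mulVec, dotProduct, coeff_mul_C]

theorem vecCoeff_zero_solution (H : Matrix ι ι A⟦X⟧) (a : ι → A) :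
    vecCoeff 0 (solution H a) = a := by
  rw [vecCoeff_solution, fundCoeff, one_mulVec]

theorem solution_injective (H : Matrix ι ι A⟦X⟧) : Function.Injective (solution H) :=
  Function.LeftInverse.injective (vecCoeff_zero_solution H)

theorem solution_single (H : Matrix ι ι A⟦X⟧) (j : ι) :
    solution H (Pi.single j 1) = (fundMatrix H).col j := by
  have hC : (fun i => C ((Pi.single j 1 : ι → A) i)) = (Pi.single j 1 : ι → A⟦X⟧) := by
    ext i : 1
    rcases eq_or_ne i j with rfl | h <;> simp [*]
  rw [solution_apply, hC, mulVec_single_one]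

noncomputable def solutionBasis (H : Matrix ι ι A⟦X⟧) :
    Module.Basis ι A (LinearMap.range (solution H)) :=
  (Pi.basisFun A ι).map (LinearEquiv.ofInjective _ (solution_injective H))

theorem coe_solutionBasis (H : Matrix ι ι A⟦X⟧) (j : ι) :
    (solutionBasis H j : ι → A⟦X⟧) = (fundMatrix H).col j := by
  rw [solutionBasis, Module.Basis.map_apply, Pi.basisFun_apply, LinearEquiv.ofInjective_apply,
    solution_single]

variable [Algebra ℚ A]

theorem nabla_solution (H : Matrix ι ι A⟦X⟧) (hH : IsNilpotent (H.map constantCoeff))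
    (a : ι → A) : nabla H (solution H a) = solution H (H.map constantCoeff *ᵥ a) := by
  refine ext_vecCoeff fun k => ?_
  simp only [vecCoeff_nabla, vecCoeff_solution, mulVec_mulVec]
  rw [← fundCoeff_spec H hH k, add_mulVec, sum_mulVec]

theorem pow_nabla_solution (H : Matrix ι ι A⟦X⟧) (hH : IsNilpotent (H.map constantCoeff))
    (a : ι → A) (N : ℕ) :
    (nabla H ^ N) (solution H a) = solution H ((H.map constantCoeff) ^ N *ᵥ a) := by
  induction N with
  | zero => simp
  | succ N ih =>
    rw [pow_succ', Module.End.mul_apply, ih, nabla_solution H hH, mulVec_mulVec, pow_succ']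

theorem mem_range_solution_iff {H : Matrix ι ι A⟦X⟧} (hH : IsNilpotent (H.map constantCoeff))
    {v : ι → A⟦X⟧} : v ∈ LinearMap.range (solution H) ↔ ∃ N, (nabla H ^ N) v = 0 := by
  obtain ⟨M, hM⟩ := id hH
  constructor
  · rintro ⟨a, rfl⟩
    exact ⟨M, by rw [pow_nabla_solution H hH, hM, zero_mulVec, map_zero]⟩
  · rintro ⟨N, hv⟩
    refine ⟨vecCoeff 0 v,
      sub_eq_zero.mp (eq_zero_of_pow_nabla_apply_eq_zero hH (N := M + N) ?_ ?_)⟩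
    · rw [map_sub, pow_nabla_solution H hH, pow_eq_zero_of_le (M.le_add_right N) hM, zero_mulVec,
        map_zero, pow_add, Module.End.mul_apply, hv, map_zero, sub_zero]
    · rw [map_sub, vecCoeff_zero_solution, sub_self]

end PowerSeries

/-- Let `A` be a commutative ring containing `ℚ` and `H` an `n × n` matrix over
`A⟦x⟧` with nilpotent constant term. Define `D v = x • v' + H ⬝ v` on `A⟦x⟧ⁿ` and let
`V = {v | D^[N] v = 0 for some N}`. Then `V` is an `A`-submodule of `A⟦x⟧ⁿ`, free of rank `n`
over `A`, stable under `D`, the restriction of `D` to `V` is `A`-linear and nilpotent, and the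
natural `A⟦x⟧`-linear map `A⟦x⟧ ⊗[A] V → A⟦x⟧ⁿ` is bijective. -/
theorem stmt3 (A : Type*) [CommRing A] [Algebra ℚ A] (n : ℕ)
    (H : Matrix (Fin n) (Fin n) (PowerSeries A))
    (hH : IsNilpotent (H.map (PowerSeries.constantCoeff (R := A))))
    (D : (Fin n → PowerSeries A) → (Fin n → PowerSeries A))
    (hD : ∀ (v : Fin n → PowerSeries A) (i : Fin n),
      D v i = PowerSeries.X * PowerSeries.derivative A (v i) + H.mulVec v i) :
    ∃ V : Submodule A (Fin n → PowerSeries A),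
      (V : Set (Fin n → PowerSeries A)) = {v | ∃ N : ℕ, D^[N] v = 0} ∧
      Nonempty (Module.Basis (Fin n) A V) ∧
      (∀ v ∈ V, D v ∈ V) ∧
      (∃ DV : V →ₗ[A] V,
        (∀ v : V, (DV v : Fin n → PowerSeries A) = D (v : Fin n → PowerSeries A)) ∧
        IsNilpotent DV) ∧
      Function.Bijective (LinearMap.liftBaseChange (PowerSeries A) V.subtype) := by
  obtain rfl : D = nabla H := funext fun v => funext (hD v)
  have hV : ∀ v ∈ LinearMap.range (solution H), nabla H v ∈ LinearMap.range (solution H) := by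
    rintro _ ⟨a, rfl⟩
    exact ⟨_, (nabla_solution H hH a).symm⟩
  refine ⟨LinearMap.range (solution H), ?_, ⟨solutionBasis H⟩, hV,
    ⟨(nabla H).restrict hV, fun v => rfl, ?_⟩, ?_⟩
  · ext v
    simp [mem_range_solution_iff hH, ← Module.End.coe_pow]
  · obtain ⟨M, hM⟩ := id hH
    refine ⟨M, LinearMap.ext fun ⟨_, a, ha⟩ => ?_⟩
    subst ha
    rw [Module.End.pow_restrict]
    ext1
    simp [pow_nabla_solution H hH, hM]
  · exact (solutionBasis H).liftBaseChange_subtype_bijective (isUnit_fundMatrix H)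
      (coe_solutionBasis H)
end

section
/- Let K be a field of characteristic 0, let R := {(f,g) ∈ K[[x]] × K[[y]] : f(0) = g(0)}, and let D : R → R be the derivation D(f,g) = (x·f′, −y·g′). Let H₀ be a nilpotent n×n matrix over K, regarded as a matrix over R via the constants. Define ∇ : Rⁿ → Rⁿ by ∇(v) = D(v) + H₀·v. Then {v ∈ Rⁿ : ∇^N(v) = 0 for some N ∈ ℕ} = Kⁿ, the set of vectors with constant entries. -/
/-- The ring `R = {(f,g) ∈ K⟦x⟧ × K⟦y⟧ : f(0) = g(0)}` (isomorphic to `K⟦x,y⟧/(xy)`),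
as a subalgebra of the product of two power series rings. -/
def nodeRing (K : Type*) [CommRing K] : Subalgebra K (PowerSeries K × PowerSeries K) where
  carrier := {p | PowerSeries.constantCoeff (R := K) p.1 = PowerSeries.constantCoeff (R := K) p.2}
  mul_mem' := by
    intro a b ha hb
    simp only [Set.mem_setOf_eq, Prod.fst_mul, Prod.snd_mul, map_mul] at *
    rw [ha, hb]
  add_mem' := by
    intro a b ha hb
    simp only [Set.mem_setOf_eq, Prod.fst_add, Prod.snd_add, map_add] at *
    rw [ha, hb]
  algebraMap_mem' := by
    intro r
    simp [Algebra.algebraMap_eq_smul_one, Prod.smul_fst, Prod.smul_snd]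

/-- The derivation `D(f,g) = (x·f′, −y·g′)` on the ring `nodeRing K`. -/
noncomputable def nodeD {K : Type*} [CommRing K] (p : nodeRing K) : nodeRing K :=
  ⟨(PowerSeries.X * PowerSeries.derivative K (p : PowerSeries K × PowerSeries K).1,
    -(PowerSeries.X * PowerSeries.derivative K (p : PowerSeries K × PowerSeries K).2)), by
    show PowerSeries.constantCoeff (R := K) _ = PowerSeries.constantCoeff (R := K) _
    simp⟩

/-!
Under `nodeD` the `k`-th coefficient of the first branch is multiplied by `k` and that of the
second branch by `-k`. So on `k`-th coefficients the operator `v ↦ nodeD v + H₀ v` acts as the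
matrix `±k + H₀`, which for `k ≠ 0` is a unit, being a nonzero scalar plus a nilpotent matrix; a
vector killed by an iterate of the operator therefore has all nonconstant coefficients zero.
Conversely, on constant vectors the operator acts as the nilpotent `H₀`.
-/

open PowerSeries Matrix

theorem PowerSeries.coeff_X_mul_derivative_s5 {K : Type*} [CommRing K] (k : ℕ) (f : K⟦X⟧) :
    coeff k (X * derivative K f) = k * coeff k f := by
  cases k with
  | zero => simp
  | succ m =>
    rw [coeff_succ_X_mul, coeff_derivative]
    push_cast
    ring

namespace nodeRing

variable {K : Type*} [CommRing K]

noncomputable def coeffFst (k : ℕ) : nodeRing K →ₗ[K] K :=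
  coeff k ∘ₗ LinearMap.fst K _ _ ∘ₗ (nodeRing K).val.toLinearMap

noncomputable def coeffSnd (k : ℕ) : nodeRing K →ₗ[K] K :=
  coeff k ∘ₗ LinearMap.snd K _ _ ∘ₗ (nodeRing K).val.toLinearMap

theorem coeffFst_apply (k : ℕ) (p : nodeRing K) :
    coeffFst k p = coeff k (p : K⟦X⟧ × K⟦X⟧).1 := rfl

theorem coeffSnd_apply (k : ℕ) (p : nodeRing K) :
    coeffSnd k p = coeff k (p : K⟦X⟧ × K⟦X⟧).2 := rfl

theorem coeffFst_nodeD (k : ℕ) (p : nodeRing K) : coeffFst k (nodeD p) = k * coeffFst k p := by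
  simp [coeffFst_apply, nodeD, coeff_X_mul_derivative_s5]

theorem coeffSnd_nodeD (k : ℕ) (p : nodeRing K) : coeffSnd k (nodeD p) = -k * coeffSnd k p := by
  simp [coeffSnd_apply, nodeD, coeff_X_mul_derivative_s5]

theorem coe_algebraMap (c : K) :
    (algebraMap K (nodeRing K) c : K⟦X⟧ × K⟦X⟧) = (C c, C c) := rfl

theorem mem_range_algebraMap_of_coeff_eq_zero {p : nodeRing K}
    (h : ∀ k, 0 < k → coeffFst k p = 0 ∧ coeffSnd k p = 0) :
    p ∈ Set.range (algebraMap K (nodeRing K)) := by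
  refine ⟨constantCoeff (p : K⟦X⟧ × K⟦X⟧).1, Subtype.ext (Prod.ext ?_ ?_)⟩ <;> ext (_ | k)
  · simp
  · simpa [coe_algebraMap, coeffFst_apply] using ((h (k + 1) k.succ_pos).1).symm
  · simp only [coe_algebraMap, coeff_zero_C, coeff_zero_eq_constantCoeff]
    exact p.2
  · simpa [coe_algebraMap, coeffSnd_apply] using ((h (k + 1) k.succ_pos).2).symm

theorem nodeD_algebraMap (c : K) : nodeD (algebraMap K (nodeRing K) c) = 0 :=
  Subtype.ext (Prod.ext (by simp [nodeD]) (by simp [nodeD]))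

variable {ι : Type*} [Fintype ι]

noncomputable def connection (H₀ : Matrix ι ι K) (v : ι → nodeRing K) : ι → nodeRing K :=
  fun i => nodeD (v i) + (H₀.map (algebraMap K (nodeRing K)) *ᵥ v) i

theorem map_mulVec_map_algebraMap (φ : nodeRing K →ₗ[K] K) (H₀ : Matrix ι ι K)
    (v : ι → nodeRing K) (i : ι) :
    φ ((H₀.map (algebraMap K (nodeRing K)) *ᵥ v) i) = (H₀ *ᵥ fun j => φ (v j)) i := by
  simp [mulVec, dotProduct, ← Algebra.smul_def]

theorem connection_algebraMap (H₀ : Matrix ι ι K) (c : ι → K) :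
    connection H₀ (algebraMap K (nodeRing K) ∘ c) = algebraMap K (nodeRing K) ∘ (H₀ *ᵥ c) := by
  ext1 i
  simp [connection, nodeD_algebraMap, RingHom.map_mulVec]

variable [DecidableEq ι]

theorem map_connection {φ : nodeRing K →ₗ[K] K} {c : K} (hφ : ∀ p, φ (nodeD p) = c * φ p)
    (H₀ : Matrix ι ι K) (v : ι → nodeRing K) :
    (fun i => φ (connection H₀ v i)) = (c • 1 + H₀) *ᵥ fun i => φ (v i) := by
  ext i
  simp [connection, hφ, map_mulVec_map_algebraMap, add_mulVec, smul_mulVec]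

theorem map_iterate_connection {φ : nodeRing K →ₗ[K] K} {c : K}
    (hφ : ∀ p, φ (nodeD p) = c * φ p) (H₀ : Matrix ι ι K) (N : ℕ) (v : ι → nodeRing K) :
    (fun i => φ ((connection H₀)^[N] v i)) = (c • 1 + H₀) ^ N *ᵥ fun i => φ (v i) := by
  induction N with
  | zero => simp
  | succ N ih => rw [Function.iterate_succ_apply', map_connection hφ, ih, mulVec_mulVec, pow_succ']

theorem isUnit_smul_one_add {c : K} (hc : IsUnit c) {H₀ : Matrix ι ι K} (hH₀ : IsNilpotent H₀) :
    IsUnit (c • 1 + H₀) := by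
  rw [← Algebra.algebraMap_eq_smul_one]
  exact hH₀.isUnit_add_left_of_commute (hc.map _) (Algebra.commutes c H₀).symm

theorem map_eq_zero_of_iterate_connection_eq_zero {φ : nodeRing K →ₗ[K] K} {c : K}
    (hφ : ∀ p, φ (nodeD p) = c * φ p) (hc : IsUnit c) {H₀ : Matrix ι ι K}
    (hH₀ : IsNilpotent H₀) {N : ℕ} {v : ι → nodeRing K} (hN : (connection H₀)^[N] v = 0) (i : ι) :
    φ (v i) = 0 := by
  have h : (c • 1 + H₀) ^ N *ᵥ (fun i => φ (v i)) = (c • 1 + H₀) ^ N *ᵥ 0 := by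
    rw [← map_iterate_connection hφ, hN, mulVec_zero]
    exact funext fun _ => map_zero φ
  exact congrFun (mulVec_injective_of_isUnit ((isUnit_smul_one_add hc hH₀).pow N) h) i

theorem iterate_connection_algebraMap (H₀ : Matrix ι ι K) (N : ℕ) (c : ι → K) :
    (connection H₀)^[N] (algebraMap K (nodeRing K) ∘ c)
      = algebraMap K (nodeRing K) ∘ (H₀ ^ N *ᵥ c) := by
  induction N with
  | zero => simp
  | succ N ih =>
    rw [Function.iterate_succ_apply', ih, connection_algebraMap, mulVec_mulVec, pow_succ']

end nodeRing

open nodeRing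

/-- Let `K` be a field of characteristic `0`, `R = nodeRing K`, and `H₀` a
nilpotent `n × n` matrix over `K`, regarded over `R` via the constants. Define
`D v = nodeD v + H₀ ⬝ v` on `Rⁿ`. Then the set of vectors killed by some iterate of `D` is
exactly `Kⁿ`, the set of vectors with constant entries. -/
theorem stmt5 (K : Type*) [Field K] [CharZero K] (n : ℕ)
    (H₀ : Matrix (Fin n) (Fin n) K) (hH₀ : IsNilpotent H₀)
    (D : (Fin n → nodeRing K) → (Fin n → nodeRing K))
    (hD : ∀ (v : Fin n → nodeRing K) (i : Fin n),
      D v i = nodeD (v i) + (H₀.map (algebraMap K (nodeRing K))).mulVec v i) :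
    {v : Fin n → nodeRing K | ∃ N : ℕ, D^[N] v = 0}
      = {v : Fin n → nodeRing K | ∀ i, v i ∈ Set.range (algebraMap K (nodeRing K))} := by
  obtain rfl : D = connection H₀ := funext fun v => funext (hD v)
  ext v
  constructor
  · rintro ⟨N, hN⟩ i
    refine mem_range_algebraMap_of_coeff_eq_zero fun k hk => ?_
    have hk : IsUnit (k : K) := (Nat.cast_ne_zero.2 hk.ne').isUnit
    exact ⟨map_eq_zero_of_iterate_connection_eq_zero (coeffFst_nodeD k) hk hH₀ hN i,
      map_eq_zero_of_iterate_connection_eq_zero (coeffSnd_nodeD k) hk.neg hH₀ hN i⟩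
  · intro hv
    choose c hc using hv
    obtain rfl : v = algebraMap K (nodeRing K) ∘ c := funext fun i => (hc i).symm
    obtain ⟨m, hm⟩ := hH₀
    refine ⟨m, ?_⟩
    rw [iterate_connection_algebraMap, hm, zero_mulVec]
    ext1 i
    simp
end
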